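/- arXiv:1705.07419 — 4 statements merged into one kernel-verified Lean document; each statement's English description precedes it below -/
import Mathlib

section
/- Let G = K_{n_1,...,n_k} be a complete k-partite graph of order n = n_1 + ... + n_k. Then the characteristic polynomial of the distance Laplacian matrix of G is x(x-n)^{k-1} ∏_{i=1}^k (x - n - n_i)^{n_i - 1}. -/
open Finset Matrix Polynomial SimpleGraph

variable {V : Type*} [Fintype V] [DecidableEq V]

/-- The distance matrix of a graph: entries are graph distances (as reals). -/
noncomputable def distMatrix (G : SimpleGraph V) : Matrix V V ℝ :=
  fun i j => (G.dist i j : ℝ)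

/-- The transmission of a vertex: sum of distances to all vertices. -/
noncomputable def transmission (G : SimpleGraph V) (i : V) : ℝ :=
  ∑ j, (G.dist i j : ℝ)

/-- The distance Laplacian matrix `L(G) = Tr(G) - D(G)`. -/
noncomputable def distLaplacian (G : SimpleGraph V) : Matrix V V ℝ :=
  Matrix.diagonal (transmission G) - distMatrix G

/-- The distance signless Laplacian matrix `Q(G) = Tr(G) + D(G)`. -/
noncomputable def distSignlessLaplacian (G : SimpleGraph V) : Matrix V V ℝ :=
  Matrix.diagonal (transmission G) + distMatrix G

/-- `μ` is an eigenvalue of the matrix `A`. -/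
def IsEigOf (A : Matrix V V ℝ) (μ : ℝ) : Prop :=
  ∃ x : V → ℝ, x ≠ 0 ∧ A.mulVec x = μ • x

/-- Largest eigenvalue (spectral radius for our PSD matrices). -/
noncomputable def maxEig (A : Matrix V V ℝ) : ℝ := sSup {μ : ℝ | IsEigOf A μ}

/-- Smallest eigenvalue. -/
noncomputable def minEig (A : Matrix V V ℝ) : ℝ := sInf {μ : ℝ | IsEigOf A μ}

/-- The Wiener index: half the sum of all pairwise distances. -/
noncomputable def wienerIndex (G : SimpleGraph V) : ℝ :=
  (1 / 2) * ∑ i, ∑ j, (G.dist i j : ℝ)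

/-!
In `K_{n_1,…,n_k}` two distinct vertices are at distance `1` across parts and `2` within a part,
so a vertex of the part `i` has transmission `n + n_i - 2`. With `J` the all-ones matrix this gives
`x • 1 - L = B + J`, where `B` is block diagonal with blocks `(x - n - n_i) • 1 + J`.
Every row of `B` sums to `x - n`, so the matrix determinant lemma gives
`det (B + J) = det B * (1 + n / (x - n))`, and the same lemma gives each block the determinant
`(x - n - n_i) ^ (n_i - 1) * (x - n)`. The two polynomials thus agree at all but finitely many `x`.
-/

namespace Matrix

section BlockDiagonal

variable {ι R : Type*} [Fintype ι] [DecidableEq ι] [CommRing R] {m : ι → Type*}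
  [∀ i, Fintype (m i)]

theorem det_blockDiagonal' [∀ i, DecidableEq (m i)] (M : ∀ i, Matrix (m i) (m i) R) :
    (blockDiagonal' M).det = ∏ i, (M i).det := by
  let : LinearOrder ι := LinearOrder.lift' _ (Fintype.equivFin ι).injective
  rw [(blockTriangular_blockDiagonal' M).det_fintype]
  refine Finset.prod_congr rfl fun i _ => ?_
  rw [← det_submatrix_equiv_self (Equiv.sigmaSubtype i).symm]
  congr 1
  ext a b
  exact blockDiagonal'_apply_eq M i a b

theorem blockDiagonal'_mulVec_apply (M : ∀ i, Matrix (m i) (m i) R) (v : (Σ i, m i) → R)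
    (i : ι) (a : m i) :
    (blockDiagonal' M *ᵥ v) ⟨i, a⟩ = (M i *ᵥ fun b => v ⟨i, b⟩) a := by
  simp only [mulVec, dotProduct, Fintype.sum_sigma]
  rw [Finset.sum_eq_single i]
  · simp only [blockDiagonal'_apply_eq]
  · intro j _ hj
    simp [blockDiagonal'_apply_ne M _ _ hj.symm]
  · simp

end BlockDiagonal

section AllOnes

variable {n K : Type*} [Fintype n] [DecidableEq n] [Field K]

theorem scalar_add_allOnes_mulVec_one (c : K) :
    (scalar n c + of fun _ _ => 1) *ᵥ 1 = (c + Fintype.card n) • 1 := by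
  ext a
  simp [mulVec, dotProduct, Finset.sum_add_distrib, diagonal_apply]

theorem det_add_allOnes_of_mulVec_one {A : Matrix n n K} {r : K} (hr : r ≠ 0)
    (hA : A *ᵥ 1 = r • 1) :
    (A + of fun _ _ => 1).det = A.det * (1 + Fintype.card n / r) := by
  have hcol : A *ᵥ (r⁻¹ • 1) = 1 := by
    rw [mulVec_smul, hA, smul_smul, inv_mul_cancel₀ hr, one_smul]
  have : (A + of fun _ _ => 1) =
      A * (1 + replicateCol Unit (r⁻¹ • 1 : n → K) * replicateRow Unit (1 : n → K)) := by
    rw [Matrix.mul_add, Matrix.mul_one, ← Matrix.mul_assoc, ← replicateCol_mulVec, hcol]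
    congr 1
    ext a b
    simp [Matrix.mul_apply]
  rw [this, det_mul, det_one_add_replicateCol_mul_replicateRow]
  simp [dotProduct, div_eq_mul_inv]

theorem det_scalar_add_allOnes [Nonempty n] {c : K} (hc : c ≠ 0) :
    (scalar n c + of fun _ _ => 1).det = c ^ (Fintype.card n - 1) * (c + Fintype.card n) := by
  have hrow : scalar n c *ᵥ 1 = c • 1 := by simp
  have hpow : c ^ Fintype.card n = c ^ (Fintype.card n - 1) * c := by
    rw [← pow_succ, Nat.sub_add_cancel Fintype.card_pos]
  rw [det_add_allOnes_of_mulVec_one hc hrow, scalar_apply, det_diagonal, Finset.prod_const,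
    Finset.card_univ, hpow]
  field_simp

end AllOnes

end Matrix

namespace SimpleGraph

variable {ι : Type*} {α : ι → Type*} [DecidableEq ι] [∀ i, DecidableEq (α i)]

theorem completeMultipartiteGraph_dist [Nontrivial ι] [∀ i, Nonempty (α i)] (u v : Σ i, α i) :
    (completeMultipartiteGraph α).dist u v = if u = v then 0 else if u.1 = v.1 then 2 else 1 := by
  split_ifs with huv hpart
  · simp [huv]
  · obtain ⟨j, hj⟩ := exists_ne u.1
    have hw : (⟨j, Classical.arbitrary _⟩ : Σ i, α i) ∈
        (completeMultipartiteGraph α).commonNeighbors u v := by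
      simp [mem_commonNeighbors, hj.symm, hpart ▸ hj.symm]
    have h2 : (completeMultipartiteGraph α).edist u v = 2 :=
      edist_eq_two_iff.mpr ⟨huv, by simpa using hpart, ⟨_, hw⟩⟩
    simp [dist, h2]
  · exact dist_eq_one_iff_adj.mpr hpart

theorem transmission_completeMultipartiteGraph [Fintype ι] [∀ i, Fintype (α i)] [Nontrivial ι]
    [∀ i, Nonempty (α i)] (u : Σ i, α i) :
    transmission (completeMultipartiteGraph α) u =
      Fintype.card (Σ i, α i) + Fintype.card (α u.1) - 2 := by
  have hdist : ∀ v : Σ i, α i, ((completeMultipartiteGraph α).dist u v : ℝ) =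
      1 + (if u.1 = v.1 then 1 else 0) - (if u = v then 2 else 0) := by
    intro v
    rw [completeMultipartiteGraph_dist]
    split_ifs <;> simp_all <;> norm_num
  have hpart : ∑ v : Σ i, α i, (if u.1 = v.1 then (1 : ℝ) else 0) = Fintype.card (α u.1) := by
    rw [Fintype.sum_sigma, Finset.sum_eq_single u.1 (fun j _ hj => by simp [Ne.symm hj]) (by simp)]
    simp
  simp only [transmission, hdist, Finset.sum_sub_distrib, Finset.sum_add_distrib, hpart]
  simp

variable [Fintype ι] [∀ i, Fintype (α i)] [Nontrivial ι] [∀ i, Nonempty (α i)]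

theorem scalar_sub_distLaplacian_completeMultipartiteGraph (x : ℝ) :
    scalar _ x - distLaplacian (completeMultipartiteGraph α) =
      blockDiagonal' (fun i => scalar (α i) (x - Fintype.card (Σ i, α i) - Fintype.card (α i)) +
        of fun _ _ => 1) + of fun _ _ => 1 := by
  ext ⟨i, a⟩ ⟨j, b⟩
  simp only [Matrix.sub_apply, Matrix.add_apply, distLaplacian, distMatrix, diagonal_apply,
    scalar_apply, of_apply, transmission_completeMultipartiteGraph, completeMultipartiteGraph_dist]
  by_cases hij : i = j
  · subst hij
    simp only [blockDiagonal'_apply_eq, Matrix.add_apply, diagonal_apply, of_apply,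
      Sigma.mk.inj_iff, heq_eq_eq, true_and]
    split_ifs <;> push_cast <;> ring
  · simp [blockDiagonal'_apply_ne _ _ _ hij, hij]

theorem det_scalar_sub_distLaplacian_completeMultipartiteGraph {x : ℝ}
    (hx : x ≠ Fintype.card (Σ i, α i))
    (hxi : ∀ i, x ≠ Fintype.card (Σ i, α i) + Fintype.card (α i)) :
    (scalar _ x - distLaplacian (completeMultipartiteGraph α)).det =
      x * (x - Fintype.card (Σ i, α i)) ^ (Fintype.card ι - 1) *
        ∏ i, (x - (Fintype.card (Σ i, α i) + Fintype.card (α i))) ^ (Fintype.card (α i) - 1) := by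
  set n : ℝ := ↑(Fintype.card (Σ i, α i))
  have hrow : blockDiagonal' (fun i => scalar (α i) (x - n - Fintype.card (α i)) +
      of fun _ _ => 1) *ᵥ 1 = (x - n) • 1 := by
    ext ⟨i, a⟩
    rw [blockDiagonal'_mulVec_apply]
    refine (congrFun (scalar_add_allOnes_mulVec_one _) a).trans ?_
    simp
  have hblock : ∀ i, (scalar (α i) (x - n - Fintype.card (α i)) + of fun _ _ => 1).det =
      (x - (n + Fintype.card (α i))) ^ (Fintype.card (α i) - 1) * (x - n) := by
    intro i
    rw [det_scalar_add_allOnes (by rw [sub_sub, sub_ne_zero]; exact hxi i)]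
    ring
  have hpow : (x - n) ^ Fintype.card ι = (x - n) ^ (Fintype.card ι - 1) * (x - n) := by
    rw [← pow_succ, Nat.sub_add_cancel Fintype.card_pos]
  rw [scalar_sub_distLaplacian_completeMultipartiteGraph,
    det_add_allOnes_of_mulVec_one (sub_ne_zero.mpr hx) hrow, det_blockDiagonal',
    Finset.prod_congr rfl fun i _ => hblock i, Finset.prod_mul_distrib, Finset.prod_const,
    Finset.card_univ, hpow]
  have : x - n ≠ 0 := sub_ne_zero.mpr hx
  field_simp
  ring

theorem charpoly_distLaplacian_completeMultipartiteGraph :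
    (distLaplacian (completeMultipartiteGraph α)).charpoly =
      X * (X - C (Fintype.card (Σ i, α i) : ℝ)) ^ (Fintype.card ι - 1) *
        ∏ i, (X - C ((Fintype.card (Σ i, α i) : ℝ) + Fintype.card (α i))) ^
          (Fintype.card (α i) - 1) := by
  have hfin : (insert (Fintype.card (Σ i, α i) : ℝ)
      (Set.range fun i => (Fintype.card (Σ i, α i) : ℝ) + Fintype.card (α i))).Finite :=
    (Set.finite_range _).insert _
  refine Polynomial.eq_of_infinite_eval_eq _ _ (hfin.infinite_compl.mono fun x hx => ?_)
  simp only [Set.mem_compl_iff, Set.mem_insert_iff, Set.mem_range, not_or, not_exists] at hx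
  rw [Set.mem_ofPred_eq, eval_charpoly,
    det_scalar_sub_distLaplacian_completeMultipartiteGraph hx.1 fun i => Ne.symm (hx.2 i)]
  simp only [eval_mul, eval_pow, eval_sub, eval_X, eval_C, eval_prod]

end SimpleGraph

/-- The distance Laplacian characteristic polynomial of the
complete `k`-partite graph with parts of sizes `nn i` and order
`n = ∑ i, nn i` is `x (x - n)^(k-1) ∏ i (x - n - nn i)^(nn i - 1)`. -/
theorem stmt4 (k : ℕ) (hk : 2 ≤ k) (nn : Fin k → ℕ) (hnn : ∀ i, 1 ≤ nn i)
    (n : ℕ) (hn : n = ∑ i, nn i) :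
    (distLaplacian (completeMultipartiteGraph (fun i : Fin k => Fin (nn i)))).charpoly =
      X * (X - C (n : ℝ)) ^ (k - 1) *
        ∏ i, (X - C ((n : ℝ) + (nn i : ℝ))) ^ (nn i - 1) := by
  have : Nontrivial (Fin k) := Fin.nontrivial_iff_two_le.mpr hk
  have (i : Fin k) : Nonempty (Fin (nn i)) := ⟨⟨0, hnn i⟩⟩
  subst hn
  simpa using charpoly_distLaplacian_completeMultipartiteGraph (α := fun i : Fin k => Fin (nn i))
end

section
/- Let G be a connected graph with n vertices whose maximum vertex transmission is D_1. Then the distance Laplacian spectral radius satisfies ∂_1^L(G) ≥ D_1 + D_1/(n-1). -/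
/-!
Test the Rayleigh quotient of `L = L(G)` on `x = n e_u - 𝟙`, where `u` has maximum transmission.
Since `L` is symmetric with zero row sums, `xᵀ L x = n² L_uu = n² D₁`, while `xᵀ x = n (n - 1)`;
so `n D₁ ≤ (n - 1) ∂₁ᴸ`. For `n = 1` the vector `e_u` gives `D₁ ≤ ∂₁ᴸ` instead.
-/

open Finset Matrix Polynomial SimpleGraph

variable {V : Type*} [Fintype V] [DecidableEq V]

section RealSymmetric

variable {ι : Type*} [Fintype ι]

theorem vecMul_one_eq_zero {A : Matrix ι ι ℝ} (hA : A.IsHermitian) (hA1 : A *ᵥ 1 = 0) :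
    1 ᵥ* A = 0 := by
  rw [← Matrix.mulVec_transpose, ← Matrix.conjTranspose_eq_transpose_of_trivial, hA.eq, hA1]

variable [DecidableEq ι]

theorem isEigOf_iff_mem_spectrum (A : Matrix ι ι ℝ) (μ : ℝ) :
    IsEigOf A μ ↔ μ ∈ spectrum ℝ A := by
  rw [← Matrix.spectrum_toLin', ← Module.End.hasEigenvalue_iff_mem_spectrum]
  constructor
  · rintro ⟨x, hx0, hx⟩
    exact Module.End.hasEigenvalue_of_hasEigenvector
      ⟨Module.End.mem_eigenspace_iff.mpr (by simpa using hx), hx0⟩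
  · intro h
    obtain ⟨x, hx, hx0⟩ := h.exists_hasEigenvector
    exact ⟨x, hx0, by simpa using Module.End.mem_eigenspace_iff.mp hx⟩

theorem le_maxEig_of_mem_spectrum {A : Matrix ι ι ℝ} {μ : ℝ} (hμ : μ ∈ spectrum ℝ A) :
    μ ≤ maxEig A :=
  le_csSup ((Matrix.finite_spectrum A).bddAbove.mono fun _ ↦ (isEigOf_iff_mem_spectrum A _).mp)
    ((isEigOf_iff_mem_spectrum A μ).mpr hμ)

theorem posSemidef_maxEig_sub {A : Matrix ι ι ℝ} (hA : A.IsHermitian) :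
    (algebraMap ℝ (Matrix ι ι ℝ) (maxEig A) - A).PosSemidef := by
  have hB : (algebraMap ℝ (Matrix ι ι ℝ) (maxEig A) - A).IsHermitian :=
    (Matrix.isHermitian_diagonal _).sub hA
  -- the spectrum of `c - A` is `c` minus the spectrum of `A`
  refine hB.posSemidef_iff_eigenvalues_nonneg.mpr fun i ↦ ?_
  have hi := hB.eigenvalues_mem_spectrum_real i
  rw [← spectrum.singleton_sub_eq] at hi
  obtain ⟨_, rfl, μ, hμ, hi⟩ := hi
  simpa [← hi] using le_maxEig_of_mem_spectrum hμ

theorem dotProduct_mulVec_le_maxEig {A : Matrix ι ι ℝ} (hA : A.IsHermitian) (x : ι → ℝ) :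
    x ⬝ᵥ (A *ᵥ x) ≤ maxEig A * (x ⬝ᵥ x) := by
  have hx := (posSemidef_maxEig_sub hA).dotProduct_mulVec_nonneg x
  rwa [star_trivial, Matrix.sub_mulVec, dotProduct_sub, Algebra.algebraMap_eq_smul_one,
    Matrix.smul_mulVec, Matrix.one_mulVec, dotProduct_smul, smul_eq_mul, sub_nonneg] at hx

theorem dotProduct_mulVec_card_smul_single_sub_one {A : Matrix ι ι ℝ} (hA : A.IsHermitian)
    (hA1 : A *ᵥ 1 = 0) (u : ι) :
    let x : ι → ℝ := (Fintype.card ι : ℝ) • Pi.single u 1 - 1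
    x ⬝ᵥ (A *ᵥ x) = (Fintype.card ι : ℝ) ^ 2 * A u u := by
  intro x
  have hAx : A *ᵥ x = (Fintype.card ι : ℝ) • (A *ᵥ Pi.single u 1) := by
    rw [Matrix.mulVec_sub, hA1, sub_zero, Matrix.mulVec_smul]
  rw [hAx, dotProduct_smul, sub_dotProduct, smul_dotProduct, single_dotProduct,
    Matrix.dotProduct_mulVec 1, vecMul_one_eq_zero hA hA1, zero_dotProduct,
    Matrix.mulVec_single_one]
  simp only [Matrix.col_apply, one_mul, smul_eq_mul, sub_zero]
  ring

theorem dotProduct_card_smul_single_sub_one_self (u : ι) :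
    let x : ι → ℝ := (Fintype.card ι : ℝ) • Pi.single u 1 - 1
    x ⬝ᵥ x = Fintype.card ι * (Fintype.card ι - 1) := by
  intro x
  simp only [x, sub_dotProduct, dotProduct_sub, smul_dotProduct, dotProduct_smul,
    single_dotProduct, dotProduct_single]
  simp

theorem diag_add_diag_div_le_maxEig {A : Matrix ι ι ℝ} (hA : A.IsHermitian) (hA1 : A *ᵥ 1 = 0)
    (u : ι) : A u u + A u u / (Fintype.card ι - 1) ≤ maxEig A := by
  have hcard : 1 ≤ Fintype.card ι := Fintype.card_pos_iff.mpr ⟨u⟩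
  rcases hcard.eq_or_lt with hcard | hcard
  · simpa [← hcard, Matrix.mulVec_single_one] using
      dotProduct_mulVec_le_maxEig hA (Pi.single u 1)
  · have hN : (1 : ℝ) < Fintype.card ι := by exact_mod_cast hcard
    have hRayleigh := dotProduct_mulVec_le_maxEig hA ((Fintype.card ι : ℝ) • Pi.single u 1 - 1)
    rw [dotProduct_mulVec_card_smul_single_sub_one hA hA1,
      dotProduct_card_smul_single_sub_one_self] at hRayleigh
    have hN0 : (0 : ℝ) < Fintype.card ι := by linarith
    have hcancel : Fintype.card ι * A u u ≤ maxEig A * (Fintype.card ι - 1) :=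
      le_of_mul_le_mul_left (by linarith) hN0
    calc A u u + A u u / (Fintype.card ι - 1)
        = Fintype.card ι * A u u / (Fintype.card ι - 1) := by
          field_simp [sub_ne_zero.mpr hN.ne']
          ring
      _ ≤ maxEig A := (div_le_iff₀ (by linarith)).mpr hcancel

end RealSymmetric

theorem distLaplacian_isHermitian (G : SimpleGraph V) : (distLaplacian G).IsHermitian := by
  ext i j
  by_cases h : i = j
  · simp [distLaplacian, distMatrix, h]
  · simp [distLaplacian, distMatrix, h, Ne.symm h, SimpleGraph.dist_comm]

theorem distLaplacian_mulVec_one (G : SimpleGraph V) : distLaplacian G *ᵥ 1 = 0 := by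
  ext i
  rw [distLaplacian, Matrix.sub_mulVec, Pi.sub_apply, Matrix.mulVec_diagonal]
  simp [transmission, distMatrix, Matrix.mulVec, dotProduct]

theorem distLaplacian_apply_self (G : SimpleGraph V) (u : V) :
    distLaplacian G u u = transmission G u := by
  simp [distLaplacian, distMatrix]

theorem stmt6_general (G : SimpleGraph V) (n : ℕ)
    (hn : Fintype.card V = n) (D1 : ℝ)
    (hD1 : IsGreatest (Set.range (transmission G)) D1) :
    D1 + D1 / ((n : ℝ) - 1) ≤ maxEig (distLaplacian G) := by
  obtain ⟨u, rfl⟩ := hD1.1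
  rw [← hn, ← distLaplacian_apply_self]
  exact diag_add_diag_div_le_maxEig (distLaplacian_isHermitian G) (distLaplacian_mulVec_one G) u

/-- For a connected graph on `n` vertices with maximum
transmission `D₁`, the distance Laplacian spectral radius is at least
`D₁ + D₁/(n-1)`. -/
theorem stmt6 (G : SimpleGraph V) (hG : G.Connected) (n : ℕ)
    (hn : Fintype.card V = n) (D1 : ℝ)
    (hD1 : IsGreatest (Set.range (transmission G)) D1) :
    D1 + D1 / ((n : ℝ) - 1) ≤ maxEig (distLaplacian G) :=
  stmt6_general G n hn D1 hD1
end

section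
/- Let G be a connected graph on n vertices with diameter d ≥ 3. Then the distance signless Laplacian spectral radius satisfies ∂_1^Q(G) > 2n − 4 + 2d. -/
open Finset Matrix Polynomial SimpleGraph

variable {V : Type*} [Fintype V] [DecidableEq V]

/-!
Evaluate the Rayleigh quotient of `Q(G)` at `x = 𝟙 + e_u + e_v`, where `u` and `v` realise the
diameter `d`. Since `Q 𝟙 = 2 Tr` and `Q` is symmetric,
`xᵀ Q x = 2 ∑ᵢ Tr i + 5 (Tr u + Tr v) + 2d`, while `xᵀ x = n + 6`. The triangle inequality
through `u` and `v` gives `Tr u + Tr v ≥ n d` and `Tr i ≥ n - 3 + d` for every other vertex `i`;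
with these, `xᵀ Q x - (2n - 4 + 2d) xᵀ x ≥ (n - 2)(7d - 18) > 0`.
-/
open Module.End RCLike in
theorem LinearMap.IsSymmetric.exists_hasEigenvalue_re_inner_le {𝕜 E : Type*} [RCLike 𝕜]
    [NormedAddCommGroup E] [InnerProductSpace 𝕜 E] [FiniteDimensional 𝕜 E] {T : E →ₗ[𝕜] E}
    (hT : T.IsSymmetric) {x : E} (hx : x ≠ 0) :
    ∃ μ : ℝ, HasEigenvalue T μ ∧ re (inner 𝕜 (T x) x) ≤ μ * ‖x‖ ^ 2 := by
  have : Nontrivial E := ⟨⟨x, 0, hx⟩⟩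
  refine ⟨_, hT.hasEigenvalue_iSup_of_finiteDimensional, ?_⟩
  rw [← div_le_iff₀ (by positivity)]
  refine le_ciSup (f := fun y : {y : E // y ≠ 0} ↦ re (inner 𝕜 (T y) y) / ‖(y : E)‖ ^ 2)
    ⟨‖LinearMap.toContinuousLinearMap T‖, ?_⟩ ⟨x, hx⟩
  rintro _ ⟨y, rfl⟩
  exact (le_abs_self _).trans ((LinearMap.toContinuousLinearMap T).rayleighQuotient_le_norm y)

section Eigenvalues

open Module.End

variable {A : Matrix V V ℝ}

theorem isEigOf_iff_hasEigenvalue_toLin' {μ : ℝ} :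
    IsEigOf A μ ↔ HasEigenvalue (toLin' A) μ := by
  simp only [IsEigOf, hasEigenvalue_iff, Submodule.ne_bot_iff, mem_eigenspace_iff, toLin'_apply]
  exact ⟨fun ⟨x, hx, h⟩ ↦ ⟨x, h, hx⟩, fun ⟨x, h, hx⟩ ↦ ⟨x, hx, h⟩⟩

theorem le_maxEig {μ : ℝ} (hμ : IsEigOf A μ) : μ ≤ maxEig A :=
  le_csSup ((finite_hasEigenvalue (toLin' A)).subset
    fun _ hν ↦ isEigOf_iff_hasEigenvalue_toLin'.mp hν).bddAbove hμ

theorem Matrix.IsSymm.dotProduct_mulVec_le_maxEig_mul (hA : A.IsSymm) (x : V → ℝ) :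
    x ⬝ᵥ A *ᵥ x ≤ maxEig A * (x ⬝ᵥ x) := by
  rcases eq_or_ne x 0 with rfl | hx
  · simp
  have hT := isSymmetric_toEuclideanLin_iff.mpr (isHermitian_iff_isSymm.mpr hA)
  obtain ⟨μ, hμ, hle⟩ := hT.exists_hasEigenvalue_re_inner_le (x := WithLp.toLp 2 x) (by simpa)
  have hμA : IsEigOf A μ := by
    obtain ⟨y, hy⟩ := hμ.exists_hasEigenvector
    exact ⟨y.ofLp, by simpa using hy.2, by simpa using congrArg WithLp.ofLp hy.apply_eq_smul⟩
  have hnorm : ‖WithLp.toLp 2 x‖ ^ 2 = x ⬝ᵥ x := by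
    rw [← real_inner_self_eq_norm_sq, EuclideanSpace.inner_toLp_toLp, star_trivial]
  simp only [toLpLin_toLp, toLin'_apply, EuclideanSpace.inner_toLp_toLp, star_trivial,
    RCLike.re_to_real, hnorm] at hle
  exact hle.trans <| mul_le_mul_of_nonneg_right (le_maxEig hμA) <| by
    simpa using dotProduct_self_star_nonneg x

end Eigenvalues

theorem one_add_single_add_single_dotProduct_self {R : Type*} [CommSemiring R] {u v : V}
    (huv : u ≠ v) :
    (1 + Pi.single u 1 + Pi.single v 1 : V → R) ⬝ᵥ (1 + Pi.single u 1 + Pi.single v 1) =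
      Fintype.card V + 6 := by
  simp [dotProduct_add, add_dotProduct, huv, huv.symm]
  ring

section Transmission

variable (G : SimpleGraph V) (hG : G.Connected)
include hG

omit [DecidableEq V] in
theorem card_mul_dist_le_transmission_add_transmission (u v : V) :
    Fintype.card V * (G.dist u v : ℝ) ≤ transmission G u + transmission G v := by
  have htri (i : V) : (G.dist u v : ℝ) ≤ G.dist u i + G.dist v i := by
    rw [G.dist_comm (u := v)]; exact_mod_cast hG.dist_triangle
  calc Fintype.card V * (G.dist u v : ℝ) = ∑ _i : V, (G.dist u v : ℝ) := by simp
    _ ≤ ∑ i, ((G.dist u i : ℝ) + G.dist v i) := sum_le_sum fun i _ ↦ htri i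
    _ = transmission G u + transmission G v := sum_add_distrib

theorem card_sub_card_add_sum_dist_le_transmission {i : V} {s : Finset V} (hi : i ∉ s) :
    (Fintype.card V - 1 - #s : ℝ) + ∑ j ∈ s, (G.dist i j : ℝ) ≤ transmission G i := by
  have hpos (j : V) : 1 - (if i = j then 1 else 0 : ℝ) ≤ G.dist i j := by
    split_ifs with h
    · simp
    · simpa [Nat.one_le_iff_ne_zero] using (hG.pos_dist_of_ne h).ne'
  have hcompl : ∑ j ∈ sᶜ, (1 - (if i = j then 1 else 0 : ℝ)) = Fintype.card V - #s - 1 := by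
    rw [sum_sub_distrib, sum_ite_eq, if_pos (mem_compl.mpr hi)]
    simp [card_compl, Nat.cast_sub (card_le_univ s)]
  rw [transmission, ← sum_compl_add_sum s]
  linarith [sum_le_sum fun j (_ : j ∈ sᶜ) ↦ hpos j]

theorem le_sum_transmission {u v : V} (huv : u ≠ v) :
    Fintype.card V * (G.dist u v : ℝ) + (Fintype.card V - 2) * (Fintype.card V - 3 + G.dist u v)
      ≤ ∑ i, transmission G i := by
  have hout (i : V) (hi : i ∈ ({u, v} : Finset V)ᶜ) :
      (Fintype.card V - 3 + G.dist u v : ℝ) ≤ transmission G i := by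
    have htri : (G.dist u v : ℝ) ≤ G.dist i u + G.dist i v := by
      rw [G.dist_comm (u := i) (v := u)]; exact_mod_cast hG.dist_triangle
    have hbound := card_sub_card_add_sum_dist_le_transmission G hG (mem_compl.mp hi)
    rw [card_pair huv, sum_pair huv] at hbound
    push_cast at hbound
    linarith
  have hcard : (#({u, v} : Finset V)ᶜ : ℝ) = Fintype.card V - 2 := by
    rw [card_compl, card_pair huv, Nat.cast_sub (card_pair huv ▸ card_le_univ {u, v})]; rfl
  have hrest := sum_le_sum hout
  rw [sum_const, nsmul_eq_mul, hcard] at hrest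
  rw [← sum_compl_add_sum {u, v}, sum_pair huv]
  linarith [card_mul_dist_le_transmission_add_transmission G hG u v]

end Transmission

section SignlessLaplacian

variable (G : SimpleGraph V)

theorem distSignlessLaplacian_apply (i j : V) :
    distSignlessLaplacian G i j = (if i = j then transmission G i else 0) + G.dist i j := by
  simp [distSignlessLaplacian, distMatrix, diagonal_apply]

theorem isSymm_distSignlessLaplacian : (distSignlessLaplacian G).IsSymm := by
  ext i j
  simp only [transpose_apply, distSignlessLaplacian_apply, G.dist_comm (u := i), eq_comm (a := i)]
  split_ifs with h <;> simp [h]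

theorem distSignlessLaplacian_mulVec_one : distSignlessLaplacian G *ᵥ 1 = 2 • transmission G := by
  ext i
  simp [mulVec, dotProduct, distSignlessLaplacian_apply, sum_add_distrib, transmission, two_mul]

theorem one_dotProduct_distSignlessLaplacian_mulVec (w : V → ℝ) :
    1 ⬝ᵥ distSignlessLaplacian G *ᵥ w = 2 • transmission G ⬝ᵥ w := by
  rw [dotProduct_mulVec, ← mulVec_transpose, (isSymm_distSignlessLaplacian G).eq,
    distSignlessLaplacian_mulVec_one]

theorem one_add_single_add_single_dotProduct_distSignlessLaplacian_mulVec {u v : V}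
    (huv : u ≠ v) :
    (1 + Pi.single u 1 + Pi.single v 1) ⬝ᵥ
        distSignlessLaplacian G *ᵥ (1 + Pi.single u 1 + Pi.single v 1) =
      2 * ∑ i, transmission G i + 5 * (transmission G u + transmission G v) + 2 * G.dist u v := by
  simp only [mulVec_add, dotProduct_add, add_dotProduct,
    one_dotProduct_distSignlessLaplacian_mulVec, distSignlessLaplacian_mulVec_one]
  simp [one_dotProduct, distSignlessLaplacian_apply, huv, huv.symm, G.dist_comm (u := v)]
  rw [← mul_sum]
  ring

end SignlessLaplacian

/-- For a connected graph on `n` vertices of diameter `d ≥ 3`,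
the distance signless Laplacian spectral radius exceeds `2n − 4 + 2d`. -/
theorem stmt15 (G : SimpleGraph V) (hG : G.Connected) (hd : 3 ≤ G.diam) :
    2 * (Fintype.card V : ℝ) - 4 + 2 * (G.diam : ℝ) <
      maxEig (distSignlessLaplacian G) := by
  have : Nonempty V := hG.nonempty
  obtain ⟨u, v, huv⟩ := G.exists_dist_eq_diam
  have hne : u ≠ v := by rintro rfl; simp at huv; omega
  have hdn : G.dist u v < Fintype.card V := by
    obtain ⟨p, hp, hlen⟩ := hG.exists_path_of_dist u v
    exact hlen ▸ hp.length_lt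
  have hd3 : (3 : ℝ) ≤ G.dist u v := by exact_mod_cast huv ▸ hd
  have hdn' : (G.dist u v : ℝ) + 1 ≤ Fintype.card V := by exact_mod_cast hdn
  have hray := (isSymm_distSignlessLaplacian G).dotProduct_mulVec_le_maxEig_mul
    (1 + Pi.single u 1 + Pi.single v 1)
  rw [one_add_single_add_single_dotProduct_distSignlessLaplacian_mulVec G hne,
    one_add_single_add_single_dotProduct_self hne] at hray
  have hsum := le_sum_transmission G hG hne
  have hpair := card_mul_dist_le_transmission_add_transmission G hG u v
  have hgap : 0 < (Fintype.card V - 2 : ℝ) * (7 * G.dist u v - 18) :=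
    mul_pos (by linarith) (by linarith)
  rw [← huv]
  refine lt_of_mul_lt_mul_right (hray.trans_lt' ?_) (by positivity : (0 : ℝ) ≤ Fintype.card V + 6)
  nlinarith
end

section
/- Let G be a connected graph on n ≥ 2 vertices with transmissions D_1 ≥ D_2 ≥ ... ≥ D_n. Then the smallest distance signless Laplacian eigenvalue satisfies ∂_n^Q(G) < D_n (strict inequality). -/
open Finset Matrix Polynomial SimpleGraph

variable {V : Type*} [Fintype V] [DecidableEq V]

/-
Shift `Q(G)` by the transmission `D_w` of a vertex `w`: the symmetric matrix `Q(G) - D_w I` has a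
zero diagonal entry at `w` but the nonzero entry `d(w, i)` in row `w`. A positive semidefinite
matrix with a zero diagonal entry has that whole row equal to zero, so `Q(G) - D_w I` has a
negative eigenvalue, i.e. `Q(G)` has an eigenvalue below `D_w`.
-/

namespace Matrix

theorem isEigOf_of_sub_smul_one {A : Matrix V V ℝ} {c μ : ℝ}
    (h : IsEigOf (A - c • (1 : Matrix V V ℝ)) μ) : IsEigOf A (μ + c) := by
  obtain ⟨x, hx, hAx⟩ := h
  refine ⟨x, hx, ?_⟩
  rw [sub_mulVec, smul_mulVec, one_mulVec, sub_eq_iff_eq_add] at hAx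
  rw [hAx, add_smul]

theorem IsEigOf.hasEigenvalue {A : Matrix V V ℝ} {μ : ℝ} (h : IsEigOf A μ) :
    Module.End.HasEigenvalue (toLin' A) μ := by
  obtain ⟨x, hx, hAx⟩ := h
  exact Module.End.hasEigenvalue_of_hasEigenvector
    ⟨Module.End.mem_eigenspace_iff.mpr (by rwa [toLin'_apply]), hx⟩

theorem minEig_le {A : Matrix V V ℝ} {μ : ℝ} (h : IsEigOf A μ) : minEig A ≤ μ :=
  csInf_le ((Module.End.finite_hasEigenvalue (toLin' A)).subset
    fun _ hν => IsEigOf.hasEigenvalue hν).bddBelow h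

theorem IsHermitian.isEigOf_eigenvalues {A : Matrix V V ℝ} (hA : A.IsHermitian) (k : V) :
    IsEigOf A (hA.eigenvalues k) :=
  ⟨_, fun h => hA.eigenvectorBasis.orthonormal.ne_zero k (by ext l; simpa using congrFun h l),
    hA.mulVec_eigenvectorBasis k⟩

theorem PosSemidef.apply_eq_zero_of_diag_eq_zero {A : Matrix V V ℝ} (hA : A.PosSemidef)
    {i j : V} (hii : A i i = 0) : A i j = 0 := by
  by_contra hij
  -- the quadratic form along `t • eᵢ + eⱼ` is affine in `t`; this `t` makes it `-1`
  set t := -(A j j + 1) / (2 * A i j)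
  have hq : star (t • Pi.single i 1 + Pi.single j 1) ⬝ᵥ A *ᵥ (t • Pi.single i 1 + Pi.single j 1)
      = 2 * t * A i j + A j j := by
    have hji : A j i = A i j := by simpa using congrFun (congrFun hA.1 i) j
    simp only [star_trivial, mulVec_add, mulVec_smul, mulVec_single, MulOpposite.op_one, one_smul,
      dotProduct_add, dotProduct_smul, add_dotProduct, smul_dotProduct, single_dotProduct, col_apply,
      hii, mul_zero, smul_eq_mul, hji, one_mul, zero_add]
    ring
  have := hA.dotProduct_mulVec_nonneg (t • Pi.single i 1 + Pi.single j 1)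
  rw [hq] at this
  have : 2 * t * A i j = -(A j j + 1) := by
    simp only [t]; field_simp
  linarith

theorem IsHermitian.exists_isEigOf_lt_diag {A : Matrix V V ℝ} (hA : A.IsHermitian) {i j : V}
    (hij : i ≠ j) (hAij : A i j ≠ 0) : ∃ μ, IsEigOf A μ ∧ μ < A i i := by
  set B := A - A i i • (1 : Matrix V V ℝ)
  have hB : B.IsHermitian := hA.sub (by simp [IsHermitian])
  have hB_not_psd : ¬ B.PosSemidef := fun hpsd => by
    have hBij := hpsd.apply_eq_zero_of_diag_eq_zero (i := i) (j := j) (by simp [B])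
    simp [B, one_apply_ne hij, hAij] at hBij
  obtain ⟨k, hk⟩ : ∃ k, hB.eigenvalues k < 0 := by
    by_contra! h
    exact hB_not_psd (hB.posSemidef_iff_eigenvalues_nonneg.mpr h)
  exact ⟨_, isEigOf_of_sub_smul_one (hB.isEigOf_eigenvalues k), by linarith⟩

end Matrix

theorem distSignlessLaplacian_isHermitian (G : SimpleGraph V) :
    (distSignlessLaplacian G).IsHermitian :=
  (isHermitian_diagonal _).add <| Matrix.IsHermitian.ext fun i j => by
    simp [distMatrix, SimpleGraph.dist_comm]

theorem distSignlessLaplacian_apply_self (G : SimpleGraph V) (i : V) :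
    distSignlessLaplacian G i i = transmission G i := by
  simp [distSignlessLaplacian, distMatrix]

theorem distSignlessLaplacian_apply_of_ne (G : SimpleGraph V) {i j : V} (hij : i ≠ j) :
    distSignlessLaplacian G i j = G.dist i j := by
  simp [distSignlessLaplacian, distMatrix, hij]

theorem minEig_distSignlessLaplacian_lt_transmission {G : SimpleGraph V} (hG : G.Connected)
    (hV : 1 < Fintype.card V) (w : V) : minEig (distSignlessLaplacian G) < transmission G w := by
  obtain ⟨i, hiw⟩ := Fintype.exists_ne_of_one_lt_card hV w
  have hdist : distSignlessLaplacian G w i ≠ 0 := by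
    rw [distSignlessLaplacian_apply_of_ne G hiw.symm]
    exact_mod_cast (hG.pos_dist_of_ne hiw.symm).ne'
  obtain ⟨μ, hμ, hμw⟩ := (distSignlessLaplacian_isHermitian G).exists_isEigOf_lt_diag hiw.symm hdist
  rw [distSignlessLaplacian_apply_self] at hμw
  exact (Matrix.minEig_le hμ).trans_lt hμw

/-- For a connected graph on `n ≥ 2` vertices with minimum
transmission `Dₙ`, the smallest distance signless Laplacian eigenvalue is
strictly less than `Dₙ`. -/
theorem stmt17 (G : SimpleGraph V) (hG : G.Connected)
    (hn : 2 ≤ Fintype.card V) (Dn : ℝ)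
    (hDn : IsLeast (Set.range (transmission G)) Dn) :
    minEig (distSignlessLaplacian G) < Dn := by
  obtain ⟨⟨w, rfl⟩, -⟩ := hDn
  exact minEig_distSignlessLaplacian_lt_transmission hG hn w
end
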